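/- arXiv:1507.00436 — 2 statements merged into one kernel-verified Lean document; each statement's English description precedes it below -/
import Mathlib

section
/- For a finite MDP M = (S, A, P, R, γ) with discount factor γ ∈ [0,1), there exists a unique function Q* : S × A → ℝ satisfying the Bellman optimality equation Q*(s,a) = Σ_{s'∈S} (P(s,a))(s') · (R(s,a,s') + γ · max_{a'∈A} Q*(s',a')) for all (s,a); moreover, for every initial function Q₀ : S × A → ℝ, the iterates Q_{n+1} = T Q_n converge to Q* in the sup norm. -/
open Filter Topology

noncomputable def bellman {S A : Type*} [Fintype S] [Fintype A]
    (P : S → A → PMF S) (R : S → A → S → ℝ) (γ : ℝ) (Q : S × A → ℝ) : S × A → ℝ :=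
  fun p => ∑ s' : S, ((P p.1 p.2) s').toReal * (R p.1 p.2 s' + γ * ⨆ a' : A, Q (s', a'))

lemma bellman_lipschitz {S A : Type*} [Fintype S] [Fintype A] [Nonempty S] [Nonempty A]
    (P : S → A → PMF S) (R : S → A → S → ℝ) (γ : ℝ) (hγ0 : 0 ≤ γ) :
    LipschitzWith ⟨γ, hγ0⟩ (bellman P R γ) := by
  apply LipschitzWith.of_dist_le_mul
  intro Q Q'
  have hd0 : (0:ℝ) ≤ dist Q Q' := dist_nonneg
  rw [dist_pi_le_iff (by positivity)]
  intro p
  have hsup : ∀ s' : S, |(⨆ a' : A, Q (s', a')) - ⨆ a' : A, Q' (s', a')| ≤ dist Q Q' := by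
    intro s'
    have key : ∀ f g : S × A → ℝ, (⨆ a' : A, f (s', a')) ≤ (⨆ a' : A, g (s', a')) + dist Q Q' → True := fun _ _ _ => trivial
    have h1 : ∀ (f g : S × A → ℝ), dist f g = dist Q Q' →
        (⨆ a' : A, f (s', a')) ≤ (⨆ a' : A, g (s', a')) + dist Q Q' := by
      intro f g hfg
      refine ciSup_le fun a => ?_
      have h2 : f (s', a) - g (s', a) ≤ dist Q Q' := by
        calc f (s', a) - g (s', a) ≤ |f (s', a) - g (s', a)| := le_abs_self _
        _ = dist (f (s', a)) (g (s', a)) := (Real.dist_eq _ _).symm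
        _ ≤ dist f g := dist_le_pi_dist f g (s', a)
        _ = dist Q Q' := hfg
      have h3 : g (s', a) ≤ ⨆ a' : A, g (s', a') :=
        le_ciSup (f := fun a' => g (s', a')) (Finite.bddAbove_range _) a
      linarith
    rw [abs_sub_le_iff]
    constructor
    · linarith [h1 Q Q' rfl]
    · linarith [h1 Q' Q (dist_comm Q' Q)]
  rw [Real.dist_eq]
  have hsum : ∀ pp : S × A, ∑ s' : S, ((P pp.1 pp.2) s').toReal = 1 := by
    intro pp
    have h := (P pp.1 pp.2).tsum_coe
    rw [tsum_fintype] at h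
    rw [← ENNReal.toReal_sum (fun s' _ => (P pp.1 pp.2).apply_ne_top s'), h, ENNReal.toReal_one]
  calc |bellman P R γ Q p - bellman P R γ Q' p|
      = |∑ s' : S, ((P p.1 p.2) s').toReal * (γ * ((⨆ a' : A, Q (s', a')) - ⨆ a' : A, Q' (s', a')))| := by
        simp only [bellman, ← Finset.sum_sub_distrib]
        congr 1; apply Finset.sum_congr rfl; intro s' _; ring
    _ ≤ ∑ s' : S, |((P p.1 p.2) s').toReal * (γ * ((⨆ a' : A, Q (s', a')) - ⨆ a' : A, Q' (s', a')))| :=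
        Finset.abs_sum_le_sum_abs _ _
    _ ≤ ∑ s' : S, ((P p.1 p.2) s').toReal * (γ * dist Q Q') := by
        apply Finset.sum_le_sum; intro s' _
        rw [abs_mul, abs_mul, abs_of_nonneg ENNReal.toReal_nonneg, abs_of_nonneg hγ0]
        exact mul_le_mul_of_nonneg_left (mul_le_mul_of_nonneg_left (hsup s') hγ0) ENNReal.toReal_nonneg
    _ = γ * dist Q Q' := by rw [← Finset.sum_mul, hsum p, one_mul]
    _ = ↑(⟨γ, hγ0⟩ : NNReal) * dist Q Q' := rfl

/-- there is a unique `Q*` satisfying the Bellman optimality equation, and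
value iteration `Q_{n+1} = T Q_n` converges to `Q*` in the sup norm (the norm on the
finite Pi type `S × A → ℝ` is the sup norm) from every initial `Q₀`. -/
theorem bellman_fixed_point_unique_and_value_iteration_converges
    {S A : Type*} [Fintype S] [Fintype A] [Nonempty S] [Nonempty A]
    (P : S → A → PMF S) (R : S → A → S → ℝ) (γ : ℝ) (hγ0 : 0 ≤ γ) (hγ1 : γ < 1) :
    ∃ Qstar : S × A → ℝ,
      (∀ p : S × A, Qstar p =
        ∑ s' : S, ((P p.1 p.2) s').toReal * (R p.1 p.2 s' + γ * ⨆ a' : A, Qstar (s', a'))) ∧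
      (∀ Q : S × A → ℝ,
        (∀ p : S × A, Q p =
          ∑ s' : S, ((P p.1 p.2) s').toReal * (R p.1 p.2 s' + γ * ⨆ a' : A, Q (s', a'))) →
        Q = Qstar) ∧
      (∀ Q₀ : S × A → ℝ,
        Tendsto (fun n => ‖(bellman P R γ)^[n] Q₀ - Qstar‖) atTop (𝓝 0)) := by
  have hK : (⟨γ, hγ0⟩ : NNReal) < 1 := by exact_mod_cast hγ1
  have hc : ContractingWith ⟨γ, hγ0⟩ (bellman P R γ) :=
    ⟨hK, bellman_lipschitz P R γ hγ0⟩
  refine ⟨hc.fixedPoint _, ?_, ?_, ?_⟩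
  · intro p
    conv_lhs => rw [← hc.fixedPoint_isFixedPt]
    rfl
  · intro Q hQ
    exact hc.fixedPoint_unique (funext fun p => (hQ p).symm)
  · intro Q₀
    have := hc.tendsto_iterate_fixedPoint Q₀
    rw [tendsto_iff_norm_sub_tendsto_zero] at this
    exact this
end

section
/- For a finite MDP M = (S, A, P, R, γ) with γ ∈ [0,1), let Q* be the unique fixed point of the Bellman optimality operator T and let π* : S → A be any deterministic policy that is greedy with respect to Q*, i.e., π*(s) ∈ argmax_{a∈A} Q*(s,a) for every s ∈ S. Then Q^{π*} = Q*, and for every deterministic policy π : S → A one has Q^π(s,a) ≤ Q*(s,a) for all (s,a) ∈ S × A; in particular there always exists a deterministic policy whose state-action value function is at least as large as that of any other deterministic policy at every state-action pair. -/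
open Filter Topology

/-- The policy-evaluation operator of a finite MDP for a deterministic policy `π : S → A`. -/
noncomputable def polEval {S A : Type*} [Fintype S]
    (P : S → A → PMF S) (R : S → A → S → ℝ) (γ : ℝ) (π : S → A)
    (Q : S × A → ℝ) : S × A → ℝ :=
  fun p => ∑ s' : S, ((P p.1 p.2) s').toReal * (R p.1 p.2 s' + γ * Q (s', π s'))

/-! Both `Q^π ≤ Q*` and `Q* ≤ Q^{π*}` are instances of one comparison principle: if
`Q = T^π Q` and `T^π Q' ≤ Q'`, then the largest value `m` of `Q - Q'` along `π` satisfies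
`m ≤ γ m`, because `T^π Q - T^π Q'` is `γ` times a `P`-average of `Q - Q'` along `π`;
hence `m ≤ 0`. The Bellman operator dominates every `T^π` and agrees with `T^{π*}` at `Q*`
for a greedy `π*`, which makes `Q*` a supersolution for every `T^π` and a fixed point
of `T^{π*}`. -/

theorem PMF.sum_toReal_eq_one {S : Type*} [Fintype S] (p : PMF S) :
    ∑ s, (p s).toReal = 1 := by
  have h := p.tsum_coe
  rw [tsum_fintype] at h
  rw [← ENNReal.toReal_sum fun s _ => p.apply_ne_top s, h, ENNReal.toReal_one]

theorem PMF.sum_toReal_mul_le {S : Type*} [Fintype S] (p : PMF S) {f : S → ℝ} {c : ℝ}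
    (hf : ∀ s, f s ≤ c) : ∑ s, (p s).toReal * f s ≤ c :=
  calc ∑ s, (p s).toReal * f s
      ≤ ∑ s, (p s).toReal * c :=
        Finset.sum_le_sum fun s _ => mul_le_mul_of_nonneg_left (hf s) ENNReal.toReal_nonneg
    _ = c := by rw [← Finset.sum_mul, p.sum_toReal_eq_one, one_mul]

section PolicyEvaluation

variable {S A : Type*} [Fintype S] (P : S → A → PMF S) (R : S → A → S → ℝ) (γ : ℝ)

theorem polEval_sub_polEval (π : S → A) (Q Q' : S × A → ℝ) (p : S × A) :
    polEval P R γ π Q p - polEval P R γ π Q' p =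
      γ * ∑ s', ((P p.1 p.2) s').toReal * (Q (s', π s') - Q' (s', π s')) := by
  simp only [polEval, Finset.mul_sum, ← Finset.sum_sub_distrib]
  exact Finset.sum_congr rfl fun s' _ => by ring

theorem le_of_polEval_eq_of_polEval_le (hγ0 : 0 ≤ γ) (hγ1 : γ < 1) (π : S → A)
    {Q Q' : S × A → ℝ} (hQ : polEval P R γ π Q = Q)
    (hQ' : ∀ p, polEval P R γ π Q' p ≤ Q' p) (p : S × A) : Q p ≤ Q' p := by
  set D : S → ℝ := fun s => Q (s, π s) - Q' (s, π s)
  have : Nonempty S := ⟨p.1⟩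
  obtain ⟨s₀, hs₀⟩ := Finite.exists_max D
  have hstep : ∀ q : S × A, Q q - Q' q ≤ γ * D s₀ := fun q =>
    calc Q q - Q' q
        ≤ polEval P R γ π Q q - polEval P R γ π Q' q := by
          linarith [hQ' q, congrFun hQ q]
      _ = γ * ∑ s', ((P q.1 q.2) s').toReal * D s' := polEval_sub_polEval P R γ π Q Q' q
      _ ≤ γ * D s₀ := mul_le_mul_of_nonneg_left ((P q.1 q.2).sum_toReal_mul_le hs₀) hγ0
  have hmax_nonpos : D s₀ ≤ 0 := by nlinarith [hstep (s₀, π s₀)]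
  linarith [hstep p, mul_nonpos_of_nonneg_of_nonpos hγ0 hmax_nonpos]

variable [Fintype A]

theorem polEval_le_bellman (hγ0 : 0 ≤ γ) (π : S → A) (Q : S × A → ℝ) (p : S × A) :
    polEval P R γ π Q p ≤ bellman P R γ Q p :=
  Finset.sum_le_sum fun s' _ => mul_le_mul_of_nonneg_left
    (add_le_add_right (mul_le_mul_of_nonneg_left
      (le_ciSup (Set.finite_range fun a => Q (s', a)).bddAbove (π s')) hγ0) _)
    ENNReal.toReal_nonneg

theorem polEval_eq_bellman_of_greedy {π : S → A} {Q : S × A → ℝ}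
    (hgreedy : ∀ s a, Q (s, a) ≤ Q (s, π s)) : polEval P R γ π Q = bellman P R γ Q := by
  have hmax : ∀ s, ⨆ a, Q (s, a) = Q (s, π s) := fun s =>
    have : Nonempty A := ⟨π s⟩
    le_antisymm (ciSup_le (hgreedy s))
      (le_ciSup (Set.finite_range fun a => Q (s, a)).bddAbove (π s))
  funext p
  simp only [polEval, bellman, hmax]

end PolicyEvaluation

theorem greedy_policy_is_optimal_general
    {S A : Type*} [Fintype S] [Fintype A]
    (P : S → A → PMF S) (R : S → A → S → ℝ) (γ : ℝ) (hγ0 : 0 ≤ γ) (hγ1 : γ < 1)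
    (Qstar : S × A → ℝ) (hQstar : bellman P R γ Qstar = Qstar)
    (πstar : S → A) (hgreedy : ∀ s : S, ∀ a : A, Qstar (s, a) ≤ Qstar (s, πstar s))
    (Qpi : (S → A) → S × A → ℝ)
    (hQpi : ∀ π : S → A, polEval P R γ π (Qpi π) = Qpi π) :
    Qpi πstar = Qstar ∧
    (∀ π : S → A, ∀ p : S × A, Qpi π p ≤ Qstar p) ∧
    (∃ πbest : S → A, ∀ π : S → A, ∀ p : S × A, Qpi π p ≤ Qpi πbest p) := by
  have hdom : ∀ π p, Qpi π p ≤ Qstar p := fun π =>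
    le_of_polEval_eq_of_polEval_le P R γ hγ0 hγ1 π (hQpi π) fun p =>
      (polEval_le_bellman P R γ hγ0 π Qstar p).trans_eq (congrFun hQstar p)
  have hstar_fixed : polEval P R γ πstar Qstar = Qstar :=
    (polEval_eq_bellman_of_greedy P R γ hgreedy).trans hQstar
  have heq : Qpi πstar = Qstar := funext fun p =>
    le_antisymm (hdom πstar p) <| le_of_polEval_eq_of_polEval_le P R γ hγ0 hγ1 πstar
      hstar_fixed (fun q => (congrFun (hQpi πstar) q).le) p
  exact ⟨heq, hdom, πstar, fun π p => heq ▸ hdom π p⟩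

/-- if `Q*` is the (unique) fixed point of the Bellman optimality operator,
`π*` is greedy with respect to `Q*`, and `Qpi π` denotes the (unique) fixed point of the
policy-evaluation operator `T^π` for each deterministic policy `π`, then `Q^{π*} = Q*`,
every deterministic policy `π` satisfies `Q^π ≤ Q*` pointwise, and in particular there is
a deterministic policy whose state-action value function dominates that of every other
deterministic policy at every state-action pair. -/
theorem greedy_policy_is_optimal
    {S A : Type*} [Fintype S] [Fintype A] [Nonempty S] [Nonempty A]
    (P : S → A → PMF S) (R : S → A → S → ℝ) (γ : ℝ) (hγ0 : 0 ≤ γ) (hγ1 : γ < 1)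
    (Qstar : S × A → ℝ) (hQstar : bellman P R γ Qstar = Qstar)
    (πstar : S → A) (hgreedy : ∀ s : S, ∀ a : A, Qstar (s, a) ≤ Qstar (s, πstar s))
    (Qpi : (S → A) → S × A → ℝ)
    (hQpi : ∀ π : S → A, polEval P R γ π (Qpi π) = Qpi π) :
    Qpi πstar = Qstar ∧
    (∀ π : S → A, ∀ p : S × A, Qpi π p ≤ Qstar p) ∧
    (∃ πbest : S → A, ∀ π : S → A, ∀ p : S × A, Qpi π p ≤ Qpi πbest p) :=
  greedy_policy_is_optimal_general P R γ hγ0 hγ1 Qstar hQstar πstar hgreedy Qpi hQpi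
end
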